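/- With the notation above (α < q₀ case), if x₊ = inf{x : v_n(x) > 0 ∀n ≥ 1} satisfies x₊ > 1, then f(x₊) = 1, where f(x) = Σ_{k=1}^{∞} (σ_{k+1} - σ_{k-1})·v_k(x)·ζ(x)^k and ζ(x) = x - √(x² - 1). -/

import Mathlib

open Filter Topology

/-!
Put `z = ζ(x₊) ∈ (0, 1)`, so that `2 x₊ = z + z⁻¹` and `n ↦ z ^ n` solves the recurrence with the
`σ`-terms removed. The Casoratian `g n` of `v x₊` and `z ^ n` then changes by
`g (n + 1) - g n = -(σ (n + 2) - σ n) v_{n+1}(x₊) z ^ (n + 1)`, so the partial sums of `f x₊`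
telescope to `1 - g n`.

The sequence `σ` iterates `s ↦ 2 x₀ - 1 / s` between its fixed points `2 x₀ (1 - q₀) < 2 x₀ q₀`,
hence increases; and `v_n(x₊) > 0` by continuity, since `x₊` is a limit of points of positivity.
So `g` decreases to some `L ≥ 0`. If `L > 0`, then `z ^ n v_n(x₊)` has a positive limit and
`v_n(x₊)` grows geometrically with ratio tending to `1 / z > 1`. A positive solution growing at a
rate bounded away from `1` stays positive under a small decrease of `x`, contradicting the
minimality of `x₊`. Hence `L = 0` and the partial sums tend to `1`.
-/

theorem monotone_of_eq_add_sub_inv {A B : ℝ} (hA : 0 < A) (hAB : A * B = 1) {σ : ℕ → ℝ}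
    (h0 : σ 0 ∈ Set.Ioo A B) (hσ : ∀ n, σ (n + 1) = A + B - 1 / σ n) : Monotone σ := by
  have hB : 0 < B := pos_of_mul_pos_right (hAB ▸ one_pos) hA.le
  have hmem : ∀ n, σ n ∈ Set.Ioo A B := by
    intro n
    induction n with
    | zero => exact h0
    | succ n ih =>
      obtain ⟨hAs, hsB⟩ := ih
      have hs : 0 < σ n := hA.trans hAs
      rw [hσ n]
      constructor
      · have : 1 / σ n < B := by rw [div_lt_iff₀ hs]; nlinarith
        linarith
      · have : A < 1 / σ n := by rw [lt_div_iff₀ hs]; nlinarith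
        linarith
  refine monotone_nat_of_le_succ fun n => ?_
  obtain ⟨hAs, hsB⟩ := hmem n
  have hs : 0 < σ n := hA.trans hAs
  -- `A + B - 1/s - s = (s - A) (B - s) / s` because `A B = 1`
  have : 1 / σ n ≤ A + B - σ n := by
    rw [div_le_iff₀ hs]; nlinarith [mul_pos (sub_pos.2 hAs) (sub_pos.2 hsB)]
  rw [hσ n]; linarith

section Joukowski

variable {x : ℝ}

theorem sub_sqrt_sq_sub_one_mul_add (hx : 1 ≤ x) :
    (x - √(x ^ 2 - 1)) * (x + √(x ^ 2 - 1)) = 1 := by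
  have : 0 ≤ x ^ 2 - 1 := by nlinarith
  nlinarith [Real.sq_sqrt this]

theorem sub_sqrt_sq_sub_one_pos (hx : 1 ≤ x) : 0 < x - √(x ^ 2 - 1) :=
  pos_of_mul_pos_left (sub_sqrt_sq_sub_one_mul_add hx ▸ one_pos) (by positivity)

theorem sub_sqrt_sq_sub_one_lt_one (hx : 1 < x) : x - √(x ^ 2 - 1) < 1 := by
  have h := sub_sqrt_sq_sub_one_mul_add hx.le
  have : 0 < √(x ^ 2 - 1) := Real.sqrt_pos.2 (by nlinarith)
  nlinarith [sub_sqrt_sq_sub_one_pos hx.le]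

theorem sub_sqrt_sq_sub_one_add_inv (hx : 1 ≤ x) :
    (x - √(x ^ 2 - 1)) + (x - √(x ^ 2 - 1))⁻¹ = 2 * x := by
  rw [inv_eq_of_mul_eq_one_right (sub_sqrt_sq_sub_one_mul_add hx)]; ring

end Joukowski

theorem continuous_of_three_term_rec {X : Type*} [TopologicalSpace X] {v : X → ℕ → ℝ}
    {c : ℕ → X → ℝ} (hc : ∀ n, Continuous (c n)) (h0 : Continuous (v · 0))
    (h1 : Continuous (v · 1)) (hrec : ∀ x n, v x (n + 2) = c n x * v x (n + 1) - v x n) (n : ℕ) :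
    Continuous (v · n) := by
  induction n using Nat.twoStepInduction with
  | zero => exact h0
  | one => exact h1
  | more n ih ih' =>
    simp only [hrec]
    exact ((hc n).mul ih').sub ih

theorem pos_of_nonneg_of_three_term_rec {a c : ℕ → ℝ}
    (hrec : ∀ n, a (n + 2) = c n * a (n + 1) - a n) (hnn : ∀ n, 0 ≤ a (n + 1)) (h1 : 0 < a 1)
    (n : ℕ) :
    0 < a (n + 1) := by
  induction n with
  | zero => exact h1
  | succ n ih =>
    refine (hnn _).lt_of_ne' fun h => ?_
    -- a zero of a nonnegative solution would force the next term to be negative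
    have := hrec (n + 1)
    rw [h, mul_zero, zero_sub] at this
    linarith [hnn (n + 2)]

theorem isLeast_setOf_pos_of_isGLB {v : ℝ → ℕ → ℝ} {c : ℕ → ℝ} {x₁ : ℝ}
    (hcont : ∀ n, Continuous (v · n)) (hrec : ∀ n, v x₁ (n + 2) = c n * v x₁ (n + 1) - v x₁ n)
    (h1 : 0 < v x₁ 1) (hglb : IsGLB {x | ∀ n, 1 ≤ n → 0 < v x n} x₁) :
    IsLeast {x | ∀ n, 1 ≤ n → 0 < v x n} x₁ := by
  have hclosed : IsClosed {x | ∀ n, 1 ≤ n → 0 ≤ v x n} := by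
    simp only [Set.ofPred_forall]
    exact isClosed_iInter fun n => isClosed_iInter fun _ => isClosed_le continuous_const (hcont n)
  have hnn : ∀ n, 1 ≤ n → 0 ≤ v x₁ n :=
    closure_minimal (fun x hx n hn => (hx n hn).le) hclosed (hglb.mem_closure hglb.nonempty)
  have hpos := pos_of_nonneg_of_three_term_rec hrec (fun n => hnn (n + 1) (by omega)) h1
  refine ⟨fun n hn => ?_, hglb.1⟩
  obtain ⟨k, rfl⟩ := Nat.exists_eq_add_of_le' hn
  exact hpos k

def casoratian (a b : ℕ → ℝ) (n : ℕ) : ℝ := a (n + 1) * b n - a n * b (n + 1)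

theorem casoratian_succ {a b c w : ℕ → ℝ} {n : ℕ}
    (ha : a (n + 2) = (c n - w n) * a (n + 1) - a n)
    (hb : b (n + 2) = c n * b (n + 1) - b n) :
    casoratian a b (n + 1) = casoratian a b n - w n * a (n + 1) * b (n + 1) := by
  simp only [casoratian, ha, hb]; ring

theorem pow_add_two_eq {z : ℝ} (hz : z ≠ 0) (n : ℕ) :
    z ^ (n + 2) = (z + z⁻¹) * z ^ (n + 1) - z ^ n := by
  field_simp; ring

theorem sum_Icc_eq_casoratian {a w : ℕ → ℝ} {z : ℝ} (hz : z ≠ 0)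
    (hrec : ∀ n, a (n + 2) = (z + z⁻¹ - w (n + 1)) * a (n + 1) - a n) (n : ℕ) :
    ∑ k ∈ Finset.Icc 1 n, w k * a k * z ^ k =
      casoratian a (z ^ ·) 0 - casoratian a (z ^ ·) n := by
  induction n with
  | zero => simp
  | succ n ih =>
    rw [Finset.sum_Icc_succ_top (by omega), ih,
      casoratian_succ (c := fun _ => z + z⁻¹) (w := fun n => w (n + 1)) (hrec n)
        (pow_add_two_eq hz n)]
    ring

theorem mul_casoratian_pow (V : ℕ → ℝ) (z : ℝ) (n : ℕ) :
    z * casoratian V (z ^ ·) n = z ^ (n + 1) * V (n + 1) - z ^ 2 * (z ^ n * V n) := by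
  simp only [casoratian]; ring

theorem nonneg_of_le_add_of_antitone {t e : ℕ → ℝ} (ht : ∀ n, 0 ≤ t n)
    (hstep : ∀ n, t (n + 1) ≤ t n + e n) (he : Antitone e) (n : ℕ) : 0 ≤ e n := by
  by_contra! hneg
  have hdecay : ∀ k : ℕ, t (n + k) ≤ t n + k * e n := by
    intro k
    induction k with
    | zero => simp
    | succ k ih =>
      have := he (Nat.le_add_right n k)
      rw [← add_assoc]; push_cast; linarith [hstep (n + k)]
  obtain ⟨k, hk⟩ := exists_nat_gt (t n / -e n)
  rw [div_lt_iff₀ (neg_pos.2 hneg)] at hk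
  linarith [hdecay k, ht (n + k)]

theorem casoratian_pow_nonneg {V : ℕ → ℝ} {z : ℝ} (hz0 : 0 < z) (hz1 : z ≤ 1)
    (hV : ∀ n, 0 ≤ V n) (hanti : Antitone (casoratian V (z ^ ·))) (n : ℕ) :
    0 ≤ casoratian V (z ^ ·) n := by
  refine nonneg_of_mul_nonneg_right ?_ hz0
  have ht : ∀ n, 0 ≤ z ^ n * V n := fun n => mul_nonneg (pow_nonneg hz0.le n) (hV n)
  refine nonneg_of_le_add_of_antitone ht (fun n => ?_) (hanti.const_mul hz0.le) n
  have : z ^ 2 * (z ^ n * V n) ≤ z ^ n * V n :=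
    mul_le_of_le_one_left (ht n) (pow_le_one₀ hz0.le hz1)
  linarith [mul_casoratian_pow V z n]

theorem tendsto_of_eq_mul_add {z l : ℝ} (hz0 : 0 ≤ z) (hz1 : z < 1) {a b : ℕ → ℝ}
    (hab : ∀ n, a (n + 1) = z * a n + b n) (hb : Tendsto b atTop (𝓝 l)) :
    Tendsto a atTop (𝓝 (l / (1 - z))) := by
  set T := l / (1 - z)
  have hT : T = z * T + l := by
    simp only [T]; field_simp [(sub_pos.2 hz1).ne']; ring
  rw [Metric.tendsto_atTop]
  intro ε hε
  obtain ⟨N, hN⟩ := Metric.tendsto_atTop.1 hb ((1 - z) * ε / 2) (by nlinarith)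
  -- past `N` the error contracts by `z` up to a perturbation of size `(1 - z) ε / 2`
  have hcontract : ∀ k, |a (N + k) - T| ≤ z ^ k * |a N - T| + ε / 2 := by
    intro k
    induction k with
    | zero => simp; linarith
    | succ k ih =>
      have hbk := hN (N + k) (Nat.le_add_right N k)
      rw [Real.dist_eq] at hbk
      have herr : a (N + k + 1) - T = z * (a (N + k) - T) + (b (N + k) - l) := by
        rw [hab]; linear_combination -hT
      calc |a (N + (k + 1)) - T| ≤ z * |a (N + k) - T| + |b (N + k) - l| := by
            rw [← add_assoc, herr]
            refine (abs_add_le _ _).trans_eq ?_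
            rw [abs_mul, abs_of_nonneg hz0]
        _ ≤ z * (z ^ k * |a N - T| + ε / 2) + (1 - z) * ε / 2 := by gcongr
        _ = z ^ (k + 1) * |a N - T| + ε / 2 := by ring
  obtain ⟨K, hK⟩ : ∃ K, z ^ K * |a N - T| < ε / 2 := by
    have := (tendsto_pow_atTop_nhds_zero_of_lt_one hz0 hz1).mul_const |a N - T|
    rw [zero_mul] at this
    exact (this.eventually (gt_mem_nhds (half_pos hε))).exists
  refine ⟨N + K, fun n hn => ?_⟩
  obtain ⟨k, rfl⟩ := Nat.exists_eq_add_of_le (le_of_add_le_left hn)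
  have : z ^ k ≤ z ^ K := pow_le_pow_of_le_one hz0 hz1.le (by omega)
  rw [Real.dist_eq]
  calc |a (N + k) - T| ≤ z ^ k * |a N - T| + ε / 2 := hcontract k
    _ ≤ z ^ K * |a N - T| + ε / 2 := by gcongr
    _ < ε := by linarith

theorem eventually_growth_of_tendsto_casoratian {V : ℕ → ℝ} {z L : ℝ} (hz0 : 0 < z)
    (hz1 : z < 1) (hL : 0 < L) (hg : Tendsto (casoratian V (z ^ ·)) atTop (𝓝 L)) :
    ∀ᶠ n in atTop, (1 + z⁻¹) / 2 * V n ≤ V (n + 1) := by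
  have ht : Tendsto (fun n => z ^ n * V n) atTop (𝓝 (z * L / (1 - z ^ 2))) :=
    tendsto_of_eq_mul_add (sq_nonneg z) (by nlinarith)
      (fun n => by linarith [mul_casoratian_pow V z n]) (hg.const_mul z)
  have hT : 0 < z * L / (1 - z ^ 2) := div_pos (mul_pos hz0 hL) (by nlinarith)
  -- `z ^ n V n` tends to a positive limit, so `V (n + 1) / V n → z⁻¹ > (1 + z⁻¹) / 2`
  filter_upwards [(ht.const_mul ((1 + z) / 2)).eventually_lt (ht.comp (tendsto_add_atTop_nat 1))
    (by nlinarith)] with n hn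
  refine le_of_mul_le_mul_left ?_ (pow_pos hz0 (n + 1))
  convert hn.le using 1
  · field_simp; ring
  · simp

theorem pos_of_perturbed_three_term_rec {a b c : ℕ → ℝ} {N : ℕ} {β φ δ : ℝ}
    (ha : ∀ n, a (n + 2) = c n * a (n + 1) - a n)
    (hb : ∀ n, b (n + 2) = (c n - δ) * b (n + 1) - b n)
    (hapos : ∀ n, N ≤ n → 0 < a n) (hgrowth : ∀ n, N ≤ n → β * a n ≤ a (n + 1))
    (hφ : 0 < φ) (hφβ : φ < β) (hδ : φ ≤ (φ - δ) * (β * (β - φ)))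
    (hbN : 0 < b N) (hbN₁ : (a (N + 1) - φ * a N) * b N ≤ a N * b (N + 1)) :
    ∀ n, N ≤ n → 0 < b n := by
  have hφδ : 0 < φ - δ := pos_of_mul_pos_left (hφ.trans_le hδ) (by nlinarith)
  -- invariant: `b (m + 1) / b m ≥ a (m + 1) / a m - φ`
  suffices h : ∀ m, N ≤ m → 0 < b m ∧ (a (m + 1) - φ * a m) * b m ≤ a m * b (m + 1) from
    fun n hn => (h n hn).1
  intro m hm
  induction m, hm using Nat.le_induction with
  | base => exact ⟨hbN, hbN₁⟩
  | succ m hm ih =>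
    obtain ⟨hbm, hinv⟩ := ih
    have hA := hapos m hm
    have hA' := hgrowth m hm
    have hgap : 0 < a (m + 1) - φ * a m := by nlinarith [mul_pos (sub_pos.2 hφβ) hA]
    have hA'pos : 0 < a (m + 1) := by nlinarith [mul_pos hφ hA]
    have hb' : 0 < b (m + 1) := by
      have : 0 < a m * b (m + 1) := (mul_pos hgap hbm).trans_le hinv
      exact pos_of_mul_pos_right this hA.le
    refine ⟨hb', ?_⟩
    have hquad : φ * a m ^ 2 ≤ (φ - δ) * (a (m + 1) * (a (m + 1) - φ * a m)) :=
      calc φ * a m ^ 2 ≤ (φ - δ) * (β * (β - φ)) * a m ^ 2 := by gcongr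
        _ = (φ - δ) * (β * a m * (β * a m - φ * a m)) := by ring
        _ ≤ (φ - δ) * (a (m + 1) * (a (m + 1) - φ * a m)) := by
          gcongr
          nlinarith
    have hkey : a (m + 1) * b m ≤ ((φ - δ) * a (m + 1) + a m) * b (m + 1) := by
      refine le_of_mul_le_mul_left ?_ hA
      calc a m * (a (m + 1) * b m)
          ≤ ((φ - δ) * a (m + 1) + a m) * ((a (m + 1) - φ * a m) * b m) := by nlinarith
        _ ≤ ((φ - δ) * a (m + 1) + a m) * (a m * b (m + 1)) := by gcongr
        _ = a m * (((φ - δ) * a (m + 1) + a m) * b (m + 1)) := by ring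
    rw [ha, hb]
    linear_combination hkey

theorem eventually_forall_pos_of_growth {v : ℝ → ℕ → ℝ} {c : ℕ → ℝ} {x₁ β : ℝ}
    (hcont : ∀ n, Continuous (v · n))
    (hrec : ∀ x n, v x (n + 2) = (2 * x - c n) * v x (n + 1) - v x n)
    (hpos : ∀ n, 1 ≤ n → 0 < v x₁ n) (hβ : 1 < β)
    (hgrowth : ∀ᶠ n in atTop, β * v x₁ n ≤ v x₁ (n + 1)) :
    ∀ᶠ y in 𝓝 x₁, ∀ n, 1 ≤ n → 0 < v y n := by
  obtain ⟨N, hN⟩ := eventually_atTop.1 (hgrowth.and (eventually_ge_atTop 1))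
  set φ := (β - 1) / 2
  have hφ : 0 < φ := by simp only [φ]; linarith
  have hφβ : φ < β := by simp only [φ]; linarith
  have hgain : 1 < β * (β - φ) := by simp only [φ]; nlinarith
  have hinit : ∀ᶠ y in 𝓝 x₁, ∀ k ∈ Finset.Icc 1 N, 0 < v y k :=
    (Finset.eventually_all _).2 fun k hk =>
      (hcont k).continuousAt.eventually_const_lt (hpos k (Finset.mem_Icc.1 hk).1)
  have hratio : ∀ᶠ y in 𝓝 x₁,
      (v x₁ (N + 1) - φ * v x₁ N) * v y N < v x₁ N * v y (N + 1) := by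
    refine ContinuousAt.eventually_lt (by fun_prop) (by fun_prop) ?_
    have hVN := hpos N (hN N le_rfl).2
    nlinarith [mul_pos hφ (mul_pos hVN hVN)]
  have hclose : ∀ᶠ y in 𝓝 x₁, φ < (φ - 2 * (x₁ - y)) * (β * (β - φ)) :=
    ContinuousAt.eventually_lt (by fun_prop) (by fun_prop) (by nlinarith)
  filter_upwards [hinit, hratio, hclose] with y hyinit hyratio hyclose n hn
  rcases le_total n N with hnN | hNn
  · exact hyinit n (Finset.mem_Icc.2 ⟨hn, hnN⟩)
  refine pos_of_perturbed_three_term_rec (a := (v x₁ ·)) (b := (v y ·)) (N := N)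
    (c := fun n => 2 * x₁ - c n) (δ := 2 * (x₁ - y)) (hrec x₁) (fun n => ?_)
    (fun n hn => hpos n ((hN N le_rfl).2.trans hn)) (fun n hn => (hN n hn).1)
    hφ hφβ hyclose.le (hyinit N (Finset.mem_Icc.2 ⟨(hN N le_rfl).2, le_rfl⟩)) hyratio.le n hNn
  rw [hrec]; ring

theorem tendsto_casoratian_zero_of_isLeast {v : ℝ → ℕ → ℝ} {w : ℕ → ℝ} {x₁ : ℝ}
    (hw : ∀ n, 0 ≤ w (n + 1)) (hcont : ∀ n, Continuous (v · n))
    (hrec : ∀ x n, v x (n + 2) = (2 * x - w (n + 1)) * v x (n + 1) - v x n)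
    (hv0 : 0 ≤ v x₁ 0) (hleast : IsLeast {x | ∀ n, 1 ≤ n → 0 < v x n} x₁) (hx₁ : 1 < x₁) :
    Tendsto (casoratian (v x₁) ((x₁ - √(x₁ ^ 2 - 1)) ^ ·)) atTop (𝓝 0) := by
  set z := x₁ - √(x₁ ^ 2 - 1)
  have hz0 : 0 < z := sub_sqrt_sq_sub_one_pos hx₁.le
  have hz1 : z < 1 := sub_sqrt_sq_sub_one_lt_one hx₁
  have hV : ∀ n, 0 ≤ v x₁ n
    | 0 => hv0
    | n + 1 => (hleast.1 (n + 1) n.succ_pos).le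
  have hanti : Antitone (casoratian (v x₁) (z ^ ·)) := by
    refine antitone_nat_of_succ_le fun n => ?_
    rw [casoratian_succ (c := fun _ => z + z⁻¹) (w := fun n => w (n + 1))
      (by rw [sub_sqrt_sq_sub_one_add_inv hx₁.le]; exact hrec x₁ n) (pow_add_two_eq hz0.ne' n)]
    have := mul_nonneg (mul_nonneg (hw n) (hV (n + 1))) (pow_nonneg hz0.le (n + 1))
    linarith
  have hnn := casoratian_pow_nonneg hz0 hz1.le hV hanti
  have hlim := tendsto_atTop_ciInf hanti ⟨0, Set.forall_mem_range.2 hnn⟩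
  rcases (le_ciInf hnn).eq_or_lt with hL | hL
  · rwa [← hL] at hlim
  -- a positive limit forces geometric growth of `v x₁`, which survives moving `x₁` slightly left
  have hβ : 1 < (1 + z⁻¹) / 2 := by linarith [one_lt_inv₀ hz0 |>.2 hz1]
  obtain ⟨y, hy, hyS⟩ := (eventually_forall_pos_of_growth hcont hrec hleast.1 hβ
    (eventually_growth_of_tendsto_casoratian hz0 hz1 hL hlim)).exists_lt
  exact absurd (hleast.2 hyS) hy.not_ge

theorem f_at_xstar_eq_one_general
    (q₀ α x₀ : ℝ) (hq2 : q₀ < 1)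
    (hα1 : 1 - q₀ < α) (hα2 : α < q₀)
    (hx : x₀ = 1 / (2 * Real.sqrt (q₀ * (1 - q₀))))
    (σ : ℕ → ℝ)
    (hσ0 : σ 0 = 2 * x₀ * α) (hσ : ∀ n, σ (n + 1) = 2 * x₀ - 1 / σ n)
    (v : ℝ → ℕ → ℝ)
    (hv0 : ∀ x, v x 0 = 0) (hv1 : ∀ x, v x 1 = 1)
    (hvr : ∀ x, ∀ n, 1 ≤ n →
      v x (n + 1) = (2 * x - σ (n + 1) + σ (n - 1)) * v x n - v x (n - 1))
    (ζ : ℝ → ℝ) (hζ : ∀ x, ζ x = x - Real.sqrt (x ^ 2 - 1))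
    (f : ℝ → ℕ → ℝ)
    (hf : ∀ x n, f x n =
      ∑ k ∈ Finset.Icc 1 n, (σ (k + 1) - σ (k - 1)) * v x k * ζ x ^ k)
    (xs : ℝ) (hxs : xs = sInf {x : ℝ | ∀ n, 1 ≤ n → 0 < v x n})
    (h1 : 1 < xs) :
    Tendsto (f xs) atTop (nhds 1) := by
  have hq : 0 < q₀ * (1 - q₀) := mul_pos (by linarith) (by linarith)
  have hx₀ : 0 < x₀ := hx ▸ div_pos one_pos (mul_pos two_pos (Real.sqrt_pos.2 hq))
  have hσ_mono : Monotone σ := by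
    refine monotone_of_eq_add_sub_inv (A := 2 * x₀ * (1 - q₀)) (B := 2 * x₀ * q₀)
      (by nlinarith) ?_ ⟨by nlinarith, by nlinarith⟩ fun n => by rw [hσ]; ring
    rw [hx]; field_simp; rw [Real.sq_sqrt hq.le]
  set w : ℕ → ℝ := fun k => σ (k + 1) - σ (k - 1)
  have hrec : ∀ x n, v x (n + 2) = (2 * x - w (n + 1)) * v x (n + 1) - v x n := fun x n => by
    rw [hvr x (n + 1) n.succ_pos]; simp only [w, Nat.add_sub_cancel]; ring
  have hcont : ∀ n, Continuous (v · n) :=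
    continuous_of_three_term_rec (c := fun n x => 2 * x - w (n + 1)) (fun n => by fun_prop)
      (by simp only [hv0]; fun_prop) (by simp only [hv1]; fun_prop) hrec
  -- `sInf` is `0` on empty or unbounded sets, which `1 < xs` rules out
  have hglb : IsGLB {x : ℝ | ∀ n, 1 ≤ n → 0 < v x n} xs := by
    rw [hxs] at h1 ⊢
    refine isGLB_csInf (Set.nonempty_iff_ne_empty.2 fun h => ?_) (by_contra fun h => ?_)
    · rw [h, Real.sInf_empty] at h1; linarith
    · rw [Real.sInf_of_not_bddBelow h] at h1; linarith
  have hlim := tendsto_casoratian_zero_of_isLeast (fun n => sub_nonneg.2 (hσ_mono (by omega)))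
    hcont hrec (hv0 xs).ge (isLeast_setOf_pos_of_isGLB hcont (hrec xs) (by simp [hv1]) hglb) h1
  have hz := (sub_sqrt_sq_sub_one_pos h1.le).ne'
  have hfs : f xs = fun n => 1 - casoratian (v xs) ((xs - √(xs ^ 2 - 1)) ^ ·) n := by
    ext n
    rw [hf, hζ, sum_Icc_eq_casoratian hz
      (by simpa only [sub_sqrt_sq_sub_one_add_inv h1.le] using hrec xs)]
    simp [casoratian, hv0, hv1]
  rw [hfs]
  simpa using (tendsto_const_nhds (x := (1 : ℝ))).sub hlim

/-- If x₊ = inf{x : v_n(x) > 0 for all n ≥ 1} satisfies x₊ > 1, then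
f(x₊) = 1. -/
theorem f_at_xstar_eq_one
    (q₀ α x₀ : ℝ) (hq1 : 1 / 2 < q₀) (hq2 : q₀ < 1)
    (hα1 : 1 - q₀ < α) (hα2 : α < q₀)
    (hx : x₀ = 1 / (2 * Real.sqrt (q₀ * (1 - q₀))))
    (σ : ℕ → ℝ)
    (hσ0 : σ 0 = 2 * x₀ * α) (hσ : ∀ n, σ (n + 1) = 2 * x₀ - 1 / σ n)
    (v : ℝ → ℕ → ℝ)
    (hv0 : ∀ x, v x 0 = 0) (hv1 : ∀ x, v x 1 = 1)
    (hvr : ∀ x, ∀ n, 1 ≤ n →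
      v x (n + 1) = (2 * x - σ (n + 1) + σ (n - 1)) * v x n - v x (n - 1))
    (ζ : ℝ → ℝ) (hζ : ∀ x, ζ x = x - Real.sqrt (x ^ 2 - 1))
    (f : ℝ → ℕ → ℝ)
    (hf : ∀ x n, f x n =
      ∑ k ∈ Finset.Icc 1 n, (σ (k + 1) - σ (k - 1)) * v x k * ζ x ^ k)
    (xs : ℝ) (hxs : xs = sInf {x : ℝ | ∀ n, 1 ≤ n → 0 < v x n})
    (h1 : 1 < xs) :
    Tendsto (f xs) atTop (nhds 1) :=
  f_at_xstar_eq_one_general q₀ α x₀ hq2 hα1 hα2 hx σ hσ0 hσ v hv0 hv1 hvr ζ hζ f hf xs hxs h1
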